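/- Let G be a finite property graph, let ℓ be an edge label, let A be a nonempty attribute set, let 1 ≤ i, and let θ be a positive integer. If |V(A, ℓ)| · d_m^{i−1} < θ, where d_m is the maximum in-degree in G, then every simple path pattern p of length n ≥ i whose (i−1)-th attribute set equals A and whose (i−1)-th label equals ℓ is infrequent, i.e., |V(p)| < θ. -/

import Mathlib

/-- A property graph: directed edges labeled by `L`, vertices carrying attribute sets over `Att`. -/
structure PropertyGraph (V L Att : Type) where
  E : Set (V × L × V)
  attr : V → Set Att

/-- A simple path pattern of length `n`: `n+1` nonempty attribute sets and `n` edge labels. -/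
structure PathPattern (L Att : Type) (n : ℕ) where
  A : Fin (n + 1) → Set Att
  A_nonempty : ∀ i, (A i).Nonempty
  lab : Fin n → L

namespace PropertyGraph

variable {V L Att : Type}

/-- Vertex `s` matches pattern `p` if it is the source of a path matching `p`. -/
def Matches (G : PropertyGraph V L Att) {n : ℕ} (p : PathPattern L Att n) (s : V) : Prop :=
  ∃ v : Fin (n + 1) → V,
    v 0 = s ∧
    (∀ i : Fin n, (v i.castSucc, p.lab i, v i.succ) ∈ G.E) ∧
    (∀ i : Fin (n + 1), p.A i ⊆ G.attr (v i))

/-- `V(p)`: the set of vertices matching pattern `p`. -/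
def Vmatch (G : PropertyGraph V L Att) {n : ℕ} (p : PathPattern L Att n) : Set V :=
  {s | G.Matches p s}

/-- `E(A, ℓ)`: edges with label `l` whose target's attribute set covers `S`. -/
def edgesTo (G : PropertyGraph V L Att) (S : Set Att) (l : L) : Set (V × L × V) :=
  {e ∈ G.E | e.2.1 = l ∧ S ⊆ G.attr e.2.2}

/-- `V(A, ℓ)`: vertices whose attribute set covers `S` having an outgoing `l`-labeled edge. -/
def srcVerts (G : PropertyGraph V L Att) (S : Set Att) (l : L) : Set V :=
  {v | S ⊆ G.attr v ∧ ∃ w, (v, l, w) ∈ G.E}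

/-- In-degree of a vertex `w`. -/
noncomputable def inDeg (G : PropertyGraph V L Att) (w : V) : ℕ :=
  {e ∈ G.E | e.2.2 = w}.ncard

/-- `d_m`: the maximum in-degree over all vertices. -/
noncomputable def maxInDeg (G : PropertyGraph V L Att) [Fintype V] : ℕ :=
  Finset.univ.sup fun w => G.inDeg w

/-- Vertex `s` matches the reachability path pattern `⟨A₀, l*, A₁⟩`. -/
def ReachMatches (G : PropertyGraph V L Att) (A₀ A₁ : Set Att) (l : L) (s : V) : Prop :=
  ∃ n : ℕ, 1 ≤ n ∧ ∃ v : Fin (n + 1) → V,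
    v 0 = s ∧
    (∀ i : Fin n, (v i.castSucc, l, v i.succ) ∈ G.E) ∧
    A₀ ⊆ G.attr s ∧ A₁ ⊆ G.attr (v (Fin.last n))

/-- The set of vertices matching the reachability path pattern `⟨A₀, l*, A₁⟩`. -/
def VreachMatch (G : PropertyGraph V L Att) (A₀ A₁ : Set Att) (l : L) : Set V :=
  {s | G.ReachMatches A₀ A₁ l s}

end PropertyGraph

/-!
A vertex matching `p` is the source of a walk of length `i - 1` ending at a vertex of
`V(A, ℓ)`, namely the `(i-1)`-th vertex of the matching path. Going backwards from a fixed
vertex, each step can be taken along at most `d_m` edges, so at most `d_m ^ (i-1)` vertices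
start a walk of length `i - 1` ending there. Hence `|V(p)| ≤ |V(A, ℓ)| · d_m ^ (i-1) < θ`.
-/

lemma Set.Finite.ncard_biUnion_le_ncard_mul {ι α : Type*} {t : Set ι} (ht : t.Finite)
    {s : ι → Set α} {m : ℕ} (h : ∀ i ∈ t, (s i).ncard ≤ m) :
    (⋃ i ∈ t, s i).ncard ≤ t.ncard * m :=
  calc (⋃ i ∈ t, s i).ncard ≤ ∑ i ∈ ht.toFinset, (s i).ncard := by
        simpa using ht.toFinset.set_ncard_biUnion_le s
    _ ≤ ∑ _i ∈ ht.toFinset, m := Finset.sum_le_sum fun i hi => h i (ht.mem_toFinset.1 hi)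
    _ = t.ncard * m := by rw [Finset.sum_const, smul_eq_mul, Set.ncard_eq_toFinset_card t ht]

namespace PropertyGraph

variable {V L Att : Type} (G : PropertyGraph V L Att)

def walkSourcesTo : ℕ → V → Set V
  | 0, w => {w}
  | k + 1, w => ⋃ e ∈ {e ∈ G.E | e.2.2 = w}, walkSourcesTo k e.1

lemma inDeg_le_maxInDeg [Fintype V] (w : V) : G.inDeg w ≤ G.maxInDeg :=
  Finset.le_sup (f := G.inDeg) (Finset.mem_univ w)

lemma ncard_walkSourcesTo_le [Fintype V] [Finite L] (k : ℕ) (w : V) :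
    (G.walkSourcesTo k w).ncard ≤ G.maxInDeg ^ k := by
  induction k generalizing w with
  | zero => simp [walkSourcesTo]
  | succ k ih =>
    calc (G.walkSourcesTo (k + 1) w).ncard ≤ G.inDeg w * G.maxInDeg ^ k :=
          (Set.toFinite _).ncard_biUnion_le_ncard_mul fun e _ => ih e.1
      _ ≤ G.maxInDeg * G.maxInDeg ^ k := by gcongr; exact G.inDeg_le_maxInDeg w
      _ = G.maxInDeg ^ (k + 1) := (pow_succ' _ _).symm

lemma mem_walkSourcesTo {k : ℕ} (v : Fin (k + 1) → V)
    (hv : ∀ j : Fin k, ∃ l, (v j.castSucc, l, v j.succ) ∈ G.E) :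
    v 0 ∈ G.walkSourcesTo k (v (Fin.last k)) := by
  induction k with
  | zero => rfl
  | succ k ih =>
    obtain ⟨l, hl⟩ := hv (Fin.last k)
    simp only [walkSourcesTo, Set.mem_iUnion]
    refine ⟨_, ⟨hl, rfl⟩, ih (Fin.init v) fun j => by simpa [Fin.init, ← Fin.succ_castSucc] using hv j.castSucc⟩

lemma vmatch_subset_biUnion_walkSourcesTo {n : ℕ} (p : PathPattern L Att n) (k : Fin n) :
    G.Vmatch p ⊆ ⋃ w ∈ G.srcVerts (p.A k.castSucc) (p.lab k), G.walkSourcesTo k w := by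
  rintro s ⟨v, rfl, hedge, hattr⟩
  refine Set.mem_biUnion (x := v k.castSucc) ⟨hattr _, _, hedge k⟩ ?_
  exact G.mem_walkSourcesTo (fun j : Fin (k + 1) => v (Fin.castLE (by omega) j))
    fun j => ⟨_, hedge (Fin.castLE k.isLt.le j)⟩

lemma ncard_vmatch_le [Fintype V] [Finite L] {n : ℕ} (p : PathPattern L Att n) (k : Fin n) :
    (G.Vmatch p).ncard ≤ (G.srcVerts (p.A k.castSucc) (p.lab k)).ncard * G.maxInDeg ^ (k : ℕ) :=
  (Set.ncard_le_ncard (G.vmatch_subset_biUnion_walkSourcesTo p k) (Set.toFinite _)).trans <|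
    (Set.toFinite _).ncard_biUnion_le_ncard_mul fun w _ => G.ncard_walkSourcesTo_le k w

end PropertyGraph

open PropertyGraph in
/-- If |V(A,ℓ)| · d_m^(i−1) < θ, then every pattern of length n ≥ i whose
(i−1)-th attribute set equals A and whose (i−1)-th label equals ℓ is infrequent. -/
theorem prune_by_srcVerts {V L Att : Type} [Fintype V] [Fintype L] (G : PropertyGraph V L Att)
    {i : ℕ} (hi : 1 ≤ i) (l : L) (S : Set Att)
    (θ : ℕ)
    (hprune : (G.srcVerts S l).ncard * G.maxInDeg ^ (i - 1) < θ) :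
    ∀ n : ℕ, ∀ hin : i ≤ n, ∀ p : PathPattern L Att n,
      p.A ⟨i - 1, by omega⟩ = S → p.lab ⟨i - 1, by omega⟩ = l →
      (G.Vmatch p).ncard < θ := by
  intro n hin p hA hl
  rw [← hA, ← hl] at hprune
  exact (G.ncard_vmatch_le p ⟨i - 1, by omega⟩).trans_lt hprune
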